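/- Let d, k, N be integers with N > d > k ≥ 1 and define S_j := Σ_{i=0}^{d-j-2} binom(N-j-1, i) for 0 ≤ j ≤ d-2 (and S_j := 0 for j ≥ d-1). Then S_k / binom(N-k-1, d-k-1) < S_0 / binom(N-1, d-1). -/

import Mathlib

open Finset

/-- `S d N j = Σ_{i=0}^{d-j-2} C(N-j-1, i)` (a partial binomial sum); by natural
subtraction this is the empty sum `0` when `j ≥ d-1`. -/
noncomputable def S (d N j : ℕ) : ℝ :=
  ∑ i ∈ Finset.range (d - j - 1), ((N - j - 1).choose i : ℝ)

/-! The absorption identity `C(n+1, i+1) = (n+1)/(i+1) · C(n, i)` makes `C(n, i) / C(n+1, i+1)`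
increasing in `i`. Hence, termwise against the last term, `Σ_{i<t} C(n,i) / C(n,t)` is at most
`Σ_{i<t} C(n+1,i+1) / C(n+1,t+1)`, and the missing term `C(n+1,0)` makes the inequality strict.
With `n = N-j-2`, `t = d-j-2` this says that `S_j / C(N-j-1, d-j-1)` strictly decreases in `j`. -/

theorem choose_mul_choose_succ_le (n : ℕ) {i t : ℕ} (hit : i ≤ t) :
    n.choose i * (n + 1).choose (t + 1) ≤ (n + 1).choose (i + 1) * n.choose t := by
  refine Nat.le_of_mul_le_mul_left ?_ n.succ_pos
  calc (n + 1) * (n.choose i * (n + 1).choose (t + 1))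
      = (n + 1).choose (i + 1) * (n + 1).choose (t + 1) * (i + 1) := by
        rw [← mul_assoc, Nat.add_one_mul_choose_eq]; ring
    _ ≤ (n + 1).choose (i + 1) * (n + 1).choose (t + 1) * (t + 1) := by gcongr
    _ = (n + 1) * ((n + 1).choose (i + 1) * n.choose t) := by
        rw [mul_left_comm, Nat.add_one_mul_choose_eq]; ring

theorem sum_range_choose_div_choose_lt_succ {n t : ℕ} (htn : t < n) :
    (∑ i ∈ range t, (n.choose i : ℝ)) / n.choose t <
      (∑ i ∈ range (t + 1), ((n + 1).choose i : ℝ)) / (n + 1).choose (t + 1) := by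
  have hpos : (0 : ℝ) < n.choose t := by exact_mod_cast Nat.choose_pos htn.le
  rw [div_lt_div_iff₀ hpos (by exact_mod_cast Nat.choose_pos (by omega)), sum_range_succ',
    sum_mul, add_mul, sum_mul]
  have htermwise : ∀ i ∈ range t,
      (n.choose i : ℝ) * (n + 1).choose (t + 1) ≤ ((n + 1).choose (i + 1) : ℝ) * n.choose t := by
    intro i hi
    exact_mod_cast choose_mul_choose_succ_le n (mem_range.1 hi).le
  have hzero : (0 : ℝ) < ((n + 1).choose 0 : ℝ) * n.choose t := by simpa using hpos
  linarith [sum_le_sum htermwise]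

theorem S_div_choose_strictAntiOn {d N : ℕ} (hdN : d < N) :
    StrictAntiOn (fun j ↦ S d N j / (N - j - 1).choose (d - j - 1)) (Set.Iic (d - 1)) := by
  refine strictAntiOn_Iic_of_succ_lt fun j hj ↦ ?_
  have hstep := sum_range_choose_div_choose_lt_succ (n := N - j - 2) (t := d - j - 2) (by omega)
  rw [show N - j - 2 + 1 = N - j - 1 by omega, show d - j - 2 + 1 = d - j - 1 by omega] at hstep
  simp only [S, Order.succ_eq_add_one]
  rwa [show N - (j + 1) - 1 = N - j - 2 by omega, show d - (j + 1) - 1 = d - j - 2 by omega]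

theorem S_ratio_lt_of_le (d k N : ℕ) (hk : 1 ≤ k) (hkd : k < d) (hdN : d < N) :
    S d N k / ((N - k - 1).choose (d - k - 1) : ℝ) <
      S d N 0 / ((N - 1).choose (d - 1) : ℝ) :=
  S_div_choose_strictAntiOn hdN (Set.mem_Iic.2 (Nat.zero_le _))
    (Set.mem_Iic.2 (by omega)) (by omega)
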